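/- Fix real constants λ₀ > 0, a > -1 and set ξ(x) = λ₀^{a+1}·(a+1)^{-1/2}·|x|^a·x. Then for all nonnegative integers m, n: ∫_{-∞}^{+∞} (λ₀²x²)^{a/2}·exp( -(λ₀²x²)^{a+1}/(a+1) )·He_m(√2·ξ(x))·He_n(√2·ξ(x)) dx = δ_{mn}·√π·n! / (λ₀·√(a+1)), where Heₙ is the probabilist's Hermite polynomial and δ_{mn} is the Kronecker delta. -/

import Mathlib

/-!
Up to the constant `λ₀ ^ a / (a + 1)`, the integrand is `ξ'(x) · H(√2 ξ(x))` with
`H(t) = Heₘ(t) Heₙ(t) exp(-t²/2)`, where `ξ = c · oddRpow (a + 1)` is a bijection of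
`ℝ ∖ {0}`, differentiable there. The substitution `t = √2 ξ(x)` therefore reduces the claim
to the orthogonality `∫ Heₘ Heₙ exp(-t²/2) = δₘₙ n! √(2π)`. That in turn comes from
`(d/dt)ⁿ exp(-t²/2) = (-1)ⁿ Heₙ(t) exp(-t²/2)`: `n` integrations by parts move all
derivatives onto `Heₘ`, which kills it when `m < n` and leaves `n!` when `m = n`.
-/

open MeasureTheory

/-- The point canonical transformation `ξ(x) = λ₀^(a+1)·(a+1)^(-1/2)·|x|^a·x`. -/
noncomputable def xiPCT (lam a : ℝ) (x : ℝ) : ℝ :=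
  lam ^ (a + 1) * (a + 1) ^ (-(1 : ℝ) / 2) * (|x| ^ a * x)

open Polynomial Real

namespace Polynomial

theorem iterate_derivative_natDegree {R : Type*} [Semiring R] (p : R[X]) :
    derivative^[p.natDegree] p = C (p.natDegree.factorial • p.leadingCoeff) := by
  have hdeg : (derivative^[p.natDegree] p).natDegree ≤ 0 := by
    simpa using natDegree_iterate_derivative p p.natDegree
  rw [eq_C_of_natDegree_le_zero hdeg, coeff_iterate_derivative, zero_add,
    Nat.descFactorial_self, leadingCoeff]

theorem integrable_eval_mul_exp_neg_sq_div_two (P : ℝ[X]) :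
    Integrable fun x : ℝ => P.eval x * exp (-(x ^ 2 / 2)) := by
  have monomial_mul (k : ℕ) : Integrable fun x : ℝ => x ^ k * exp (-(x ^ 2 / 2)) := by
    simpa [rpow_natCast, neg_div, div_eq_inv_mul] using
      integrable_rpow_mul_exp_neg_mul_sq (b := 1 / 2) (by norm_num) (s := k)
        (by linarith [Nat.cast_nonneg (α := ℝ) k])
  simp_rw [eval_eq_sum_range, Finset.sum_mul, mul_assoc]
  exact integrable_finsetSum _ fun i _ => (monomial_mul i).const_mul _

theorem iterate_deriv_exp_neg_sq_div_two (n : ℕ) :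
    deriv^[n] (fun y : ℝ => exp (-(y ^ 2 / 2)))
      = fun x => (-1) ^ n * aeval x (hermite n) * exp (-(x ^ 2 / 2)) :=
  _root_.funext (deriv_gaussian_eq_hermite_mul_gaussian n)

theorem integrable_eval_mul_iterate_deriv_exp_neg_sq_div_two (P : ℝ[X]) (n : ℕ) :
    Integrable fun x : ℝ => P.eval x * deriv^[n] (fun y => exp (-(y ^ 2 / 2))) x := by
  simpa [iterate_deriv_exp_neg_sq_div_two, ← eval_map_algebraMap, mul_assoc, mul_left_comm]
    using (integrable_eval_mul_exp_neg_sq_div_two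
      (P * (hermite n).map (algebraMap ℤ ℝ))).const_mul ((-1) ^ n)

theorem integral_eval_mul_iterate_deriv_exp_neg_sq_div_two (P : ℝ[X]) (n : ℕ) :
    ∫ x : ℝ, P.eval x * deriv^[n] (fun y => exp (-(y ^ 2 / 2))) x
      = (-1) ^ n * ∫ x : ℝ, (derivative^[n] P).eval x * exp (-(x ^ 2 / 2)) := by
  induction n generalizing P with
  | zero => simp
  | succ n ih =>
    have hderiv (x : ℝ) : HasDerivAt (deriv^[n] fun y => exp (-(y ^ 2 / 2)))
        (deriv^[n + 1] (fun y => exp (-(y ^ 2 / 2))) x) x := by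
      rw [Function.iterate_succ_apply', iterate_deriv_exp_neg_sq_div_two]
      exact (((differentiable_const _).mul (Polynomial.differentiable_aeval _)).mul
        (by fun_prop)).differentiableAt.hasDerivAt
    rw [integral_mul_deriv_eq_deriv_mul_of_integrable (fun x _ => P.hasDerivAt x)
        (fun x _ => hderiv x) (integrable_eval_mul_iterate_deriv_exp_neg_sq_div_two P (n + 1))
        (integrable_eval_mul_iterate_deriv_exp_neg_sq_div_two (derivative P) n)
        (integrable_eval_mul_iterate_deriv_exp_neg_sq_div_two P n),
      ih, ← Function.iterate_succ_apply, pow_succ]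
    ring

theorem integral_eval_mul_hermite_mul_exp_neg_sq_div_two (P : ℝ[X]) (n : ℕ) :
    ∫ x : ℝ, P.eval x * aeval x (hermite n) * exp (-(x ^ 2 / 2))
      = ∫ x : ℝ, (derivative^[n] P).eval x * exp (-(x ^ 2 / 2)) := by
  have hsq : (-1 : ℝ) ^ n * (-1) ^ n = 1 := by rw [← mul_pow]; norm_num
  have hsign (x : ℝ) : P.eval x * aeval x (hermite n) * exp (-(x ^ 2 / 2))
      = (-1) ^ n * (P.eval x * deriv^[n] (fun y => exp (-(y ^ 2 / 2))) x) := by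
    rw [iterate_deriv_exp_neg_sq_div_two]
    linear_combination (P.eval x * aeval x (hermite n) * exp (-(x ^ 2 / 2))) * hsq.symm
  simp_rw [hsign, integral_const_mul, integral_eval_mul_iterate_deriv_exp_neg_sq_div_two,
    ← mul_assoc, hsq, one_mul]

theorem integral_exp_neg_sq_div_two : ∫ x : ℝ, exp (-(x ^ 2 / 2)) = √(2 * π) := by
  have h := integral_gaussian (1 / 2)
  rw [div_div_eq_mul_div, div_one, mul_comm π] at h
  simpa [neg_div, div_eq_inv_mul] using h

theorem integral_aeval_hermite_mul_aeval_hermite_mul_exp_neg_sq_div_two (m n : ℕ) :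
    ∫ x : ℝ, aeval x (hermite m) * aeval x (hermite n) * exp (-(x ^ 2 / 2))
      = if m = n then n.factorial * √(2 * π) else 0 := by
  wlog hmn : m ≤ n generalizing m n
  · have hne : n ≠ m := fun h => hmn h.ge
    simp_rw [mul_comm (aeval _ (hermite m))]
    rw [this n m (le_of_not_ge hmn), if_neg hne, if_neg hne.symm]
  set P : ℝ[X] := (hermite m).map (algebraMap ℤ ℝ)
  have hP : P.Monic := (hermite_monic m).map _
  have hdeg : P.natDegree = m := by
    rw [(hermite_monic m).natDegree_map, natDegree_hermite]
  simp_rw [← eval_map_algebraMap (hermite m), integral_eval_mul_hermite_mul_exp_neg_sq_div_two]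
  rcases hmn.lt_or_eq with hlt | rfl
  · rw [iterate_derivative_eq_zero (hdeg ▸ hlt : P.natDegree < n), if_neg hlt.ne]
    simp
  · have hder : derivative^[m] P = C (m.factorial : ℝ) := by
      simpa [hdeg, hP.leadingCoeff] using iterate_derivative_natDegree P
    rw [hder, if_pos rfl]
    simp_rw [eval_C]
    rw [integral_const_mul, integral_exp_neg_sq_div_two]

end Polynomial

noncomputable def oddRpow (p x : ℝ) : ℝ := |x| ^ (p - 1) * x

@[simp]
theorem oddRpow_zero_right (p : ℝ) : oddRpow p 0 = 0 := by simp [oddRpow]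

@[simp]
theorem oddRpow_one_left (x : ℝ) : oddRpow 1 x = x := by simp [oddRpow]

@[simp]
theorem oddRpow_eq_zero_iff {p x : ℝ} : oddRpow p x = 0 ↔ x = 0 := by
  simp +contextual [oddRpow, rpow_eq_zero_iff_of_nonneg]

theorem oddRpow_neg (p x : ℝ) : oddRpow p (-x) = -oddRpow p x := by simp [oddRpow]

theorem oddRpow_of_pos (p : ℝ) {x : ℝ} (hx : 0 < x) : oddRpow p x = x ^ p := by
  rw [oddRpow, abs_of_pos hx, rpow_sub_one hx.ne', div_mul_cancel₀ _ hx.ne']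

theorem oddRpow_oddRpow (p q x : ℝ) : oddRpow p (oddRpow q x) = oddRpow (p * q) x := by
  rcases eq_or_ne x 0 with rfl | hx
  · simp
  have hx' : 0 < |x| := abs_pos.2 hx
  have habs : |oddRpow q x| = |x| ^ q := by
    rw [oddRpow, abs_mul, abs_of_nonneg (rpow_nonneg hx'.le _), rpow_sub_one hx'.ne',
      div_mul_cancel₀ _ hx'.ne']
  rw [oddRpow, habs, ← rpow_mul hx'.le, oddRpow, ← mul_assoc, ← rpow_add hx', oddRpow]
  ring_nf

theorem oddRpow_inv_oddRpow {p : ℝ} (hp : p ≠ 0) (x : ℝ) :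
    oddRpow p⁻¹ (oddRpow p x) = x := by
  rw [oddRpow_oddRpow, inv_mul_cancel₀ hp, oddRpow_one_left]

theorem oddRpow_oddRpow_inv {p : ℝ} (hp : p ≠ 0) (x : ℝ) :
    oddRpow p (oddRpow p⁻¹ x) = x := by
  rw [oddRpow_oddRpow, mul_inv_cancel₀ hp, oddRpow_one_left]

theorem image_oddRpow_compl_zero {p : ℝ} (hp : p ≠ 0) : oddRpow p '' {0}ᶜ = {0}ᶜ := by
  rw [Set.image_eq_preimage_of_inverse (oddRpow_inv_oddRpow hp) (oddRpow_oddRpow_inv hp)]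
  ext x
  simp

theorem hasDerivAt_oddRpow_of_pos (p : ℝ) {x : ℝ} (hx : 0 < x) :
    HasDerivAt (oddRpow p) (p * |x| ^ (p - 1)) x := by
  rw [abs_of_pos hx]
  refine (hasDerivAt_rpow_const (Or.inl hx.ne')).congr_of_eventuallyEq ?_
  filter_upwards [Ioi_mem_nhds hx] with y hy
  exact oddRpow_of_pos p hy

theorem hasDerivAt_oddRpow (p : ℝ) {x : ℝ} (hx : x ≠ 0) :
    HasDerivAt (oddRpow p) (p * |x| ^ (p - 1)) x := by
  rcases hx.lt_or_gt with hneg | hpos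
  · have h := ((hasDerivAt_oddRpow_of_pos p (neg_pos.2 hneg)).comp x (hasDerivAt_neg x)).neg
    have hodd : -oddRpow p ∘ Neg.neg = oddRpow p := by
      funext y
      simp [oddRpow_neg]
    rwa [abs_neg, hodd, mul_neg_one, neg_neg] at h
  · exact hasDerivAt_oddRpow_of_pos p hpos

theorem integral_smul_comp_oddRpow {E : Type*} [NormedAddCommGroup E] [NormedSpace ℝ E]
    {p : ℝ} (hp : p ≠ 0) (g : ℝ → E) :
    ∫ x, (|p| * |x| ^ (p - 1)) • g (oddRpow p x) = ∫ u, g u := by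
  have hderiv (x : ℝ) (hx : x ∈ ({0}ᶜ : Set ℝ)) :
      HasDerivWithinAt (oddRpow p) (p * |x| ^ (p - 1)) {0}ᶜ x :=
    (hasDerivAt_oddRpow p hx).hasDerivWithinAt
  have h := integral_image_eq_integral_abs_deriv_smul (measurableSet_singleton 0).compl hderiv
    (Function.LeftInverse.injective (oddRpow_inv_oddRpow hp)).injOn g
  simp_rw [image_oddRpow_compl_zero hp, restrict_compl_singleton, abs_mul,
    abs_of_nonneg (rpow_nonneg (abs_nonneg _) _)] at h
  exact h.symm

theorem xiPCT_eq_mul_oddRpow (lam a x : ℝ) :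
    xiPCT lam a x = lam ^ (a + 1) * (a + 1) ^ (-(1 : ℝ) / 2) * oddRpow (a + 1) x := by
  rw [xiPCT, oddRpow, add_sub_cancel_right]

theorem sq_mul_sq_rpow {lam : ℝ} (hlam : 0 ≤ lam) (x s : ℝ) :
    (lam ^ 2 * x ^ 2) ^ s = ((lam * |x|) ^ s) ^ 2 := by
  rw [rpow_pow_comm (by positivity), mul_pow, sq_abs]

theorem sq_xiPCT {lam a : ℝ} (hlam : 0 ≤ lam) (ha : -1 < a) (x : ℝ) :
    xiPCT lam a x ^ 2 = (lam ^ 2 * x ^ 2) ^ (a + 1) / (a + 1) := by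
  have ha1 : 0 < a + 1 := by linarith
  have hx : (|x| ^ a * x) ^ 2 = (|x| ^ (a + 1)) ^ 2 := by
    rw [rpow_add_one' (abs_nonneg x) ha1.ne', mul_pow, mul_pow, sq_abs]
  have hc : ((a + 1) ^ (-(1 : ℝ) / 2)) ^ 2 = (a + 1)⁻¹ := by
    rw [← rpow_mul_natCast ha1.le, ← rpow_neg_one]
    norm_num
  rw [xiPCT, mul_pow, mul_pow, hx, hc, sq_mul_sq_rpow hlam, mul_rpow hlam (abs_nonneg x)]
  ring

theorem sq_mul_sq_rpow_div_two {lam : ℝ} (hlam : 0 ≤ lam) (x a : ℝ) :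
    (lam ^ 2 * x ^ 2) ^ (a / 2) = lam ^ a * |x| ^ a := by
  rw [sq_mul_sq_rpow hlam, ← rpow_mul_natCast (by positivity), mul_rpow hlam (abs_nonneg x)]
  norm_num

/-- orthogonality of the deformed oscillator stationary states:
`∫ (λ₀²x²)^(a/2)·exp(-(λ₀²x²)^(a+1)/(a+1))·He_m(√2ξ(x))·He_n(√2ξ(x)) dx
  = δ_{mn}·√π·n!/(λ₀·√(a+1))`. -/
theorem stmt9 (lam a : ℝ) (hlam : 0 < lam) (ha : -1 < a) (m n : ℕ) :
    ∫ x : ℝ,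
        (lam ^ 2 * x ^ 2) ^ (a / 2) * Real.exp (-((lam ^ 2 * x ^ 2) ^ (a + 1)) / (a + 1))
          * Polynomial.aeval (Real.sqrt 2 * xiPCT lam a x) (Polynomial.hermite m)
          * Polynomial.aeval (Real.sqrt 2 * xiPCT lam a x) (Polynomial.hermite n)
      = (if m = n then 1 else 0) * Real.sqrt Real.pi * (n.factorial : ℝ)
          / (lam * Real.sqrt (a + 1)) := by
  have ha1 : 0 < a + 1 := by linarith
  set c := √2 * (lam ^ (a + 1) * (a + 1) ^ (-(1 : ℝ) / 2)) with hc_def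
  set H : ℝ → ℝ := fun t => aeval t (hermite m) * aeval t (hermite n) * exp (-(t ^ 2 / 2))
  have hintegrand (x : ℝ) :
      (lam ^ 2 * x ^ 2) ^ (a / 2) * exp (-((lam ^ 2 * x ^ 2) ^ (a + 1)) / (a + 1))
          * aeval (√2 * xiPCT lam a x) (hermite m) * aeval (√2 * xiPCT lam a x) (hermite n)
        = lam ^ a / (a + 1) * ((|a + 1| * |x| ^ (a + 1 - 1)) • H (c * oddRpow (a + 1) x)) := by
    have hexp : -((lam ^ 2 * x ^ 2) ^ (a + 1)) / (a + 1) = -((√2 * xiPCT lam a x) ^ 2 / 2) := by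
      rw [mul_pow, sq_xiPCT hlam.le ha, sq_sqrt zero_le_two]
      ring
    rw [sq_mul_sq_rpow_div_two hlam.le, hexp, xiPCT_eq_mul_oddRpow, ← mul_assoc √2, ← hc_def,
      abs_of_pos ha1, add_sub_cancel_right, smul_eq_mul]
    simp only [H]
    field_simp
  calc _ = lam ^ a / (a + 1) *
          ∫ x, (|a + 1| * |x| ^ (a + 1 - 1)) • H (c * oddRpow (a + 1) x) := by
        simp_rw [hintegrand, integral_const_mul]
    _ = lam ^ a / (a + 1) * (|c⁻¹| * if m = n then n.factorial * √(2 * π) else 0) := by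
        rw [integral_smul_comp_oddRpow ha1.ne' fun u => H (c * u),
          Measure.integral_comp_mul_left H, smul_eq_mul,
          integral_aeval_hermite_mul_aeval_hermite_mul_exp_neg_sq_div_two]
    _ = _ := by
        rw [hc_def, rpow_add_one hlam.ne', neg_div, rpow_neg ha1.le, ← sqrt_eq_rpow,
          abs_of_pos (by positivity), sqrt_mul zero_le_two]
        split_ifs
        · field_simp
          exact sq_sqrt ha1.le
        · simp
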